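/- Let (G, T, k) be an instance of Multiway Near-Separator and t ∈ T a terminal such that for every other terminal t' ∈ T \ {t} there do not exist two internally vertex-disjoint t–t' paths in G. Then S ⊆ V(G)\T with |S| ≤ k is a multiway near-separator for (G, T) if and only if there exists a multiway near-separator S' ⊆ V(G)\(T\{t}) for (G, T\{t}) with |S'| ≤ k. In particular, (G,T,k) is a yes-instance iff (G, T\{t}, k) is a yes-instance. -/

import Mathlib

/-!
Deleting `t` from a near-separator `S` of `(G, T \ {t})` gives a near-separator of `(G, T)`.
Take two internally disjoint `t₁`–`t₂` paths in `G - (S \ {t})`. If `t` is an endpoint, or lies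
on one of them, say `p = p₁ ++ p₂` through `t`, then `p₁` reversed and `p₂ ++ q⁻¹` are two
internally disjoint `t`–`t₁` paths in `G`, which the hypothesis on `t` forbids. Otherwise both
paths avoid `t`, hence live in `G - S`, contradicting that `S` is a near-separator of `(G, T \ {t})`.
-/

open SimpleGraph

variable {V : Type*}

/-- The graph obtained from `G` by deleting a set `S` of vertices (kept as
isolated vertices; all edges incident to `S` are removed). -/
def SimpleGraph.eraseVerts (G : SimpleGraph V) (S : Set V) : SimpleGraph V where
  Adj u v := G.Adj u v ∧ u ∉ S ∧ v ∉ S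
  symm := ⟨fun u v ⟨h, hu, hv⟩ => ⟨h.symm, hv, hu⟩⟩
  loopless := ⟨fun v h => G.loopless.irrefl v h.1⟩

/-- Two walks with the same endpoints are internally vertex-disjoint if they
share no vertex other than their common endpoints. -/
def IntDisjoint {G : SimpleGraph V} {a b : V} (p q : G.Walk a b) : Prop :=
  ∀ x ∈ p.support, x ∈ q.support → x = a ∨ x = b

/-- There exist two internally vertex-disjoint `a`–`b` paths in `G`
(the two paths may coincide if they have no internal vertices). -/
def TwoIVD (G : SimpleGraph V) (a b : V) : Prop :=
  ∃ p q : G.Walk a b, p.IsPath ∧ q.IsPath ∧ IntDisjoint p q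

/-- `S` is a multiway near-separator of `(G, T)`. -/
def IsMWNS (G : SimpleGraph V) (T S : Set V) : Prop :=
  S ⊆ Tᶜ ∧ ∀ t₁ ∈ T, ∀ t₂ ∈ T, t₁ ≠ t₂ → ¬ TwoIVD (G.eraseVerts S) t₁ t₂

/-- `G` contains a simple cycle through at least two terminals of `T`. -/
def HasTCycle (G : SimpleGraph V) (T : Set V) : Prop :=
  ∃ (v : V) (c : G.Walk v v), c.IsCycle ∧
    ∃ t₁ ∈ T, ∃ t₂ ∈ T, t₁ ≠ t₂ ∧ t₁ ∈ c.support ∧ t₂ ∈ c.support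

/-- `v` is a cut vertex of `G`. -/
def IsCutVertex (G : SimpleGraph V) (v : V) : Prop :=
  ∃ a b : V, a ≠ v ∧ b ≠ v ∧ G.Reachable a b ∧ ¬ (G.eraseVerts {v}).Reachable a b

/-- `B` is a block of `G`: a maximal vertex set inducing a connected subgraph
without a cut vertex. -/
def IsBlock (G : SimpleGraph V) (B : Set V) : Prop :=
  B.Nonempty ∧ (G.induce B).Connected ∧ (∀ v, ¬ IsCutVertex (G.induce B) v) ∧
  ∀ B' : Set V, B ⊆ B' → (G.induce B').Connected →
    (∀ v, ¬ IsCutVertex (G.induce B') v) → B' = B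

namespace SimpleGraph

lemma eraseVerts_le (G : SimpleGraph V) (S : Set V) : G.eraseVerts S ≤ G :=
  fun _ _ h => h.1

lemma eraseVerts_sdiff_singleton_eraseVerts_singleton_le (G : SimpleGraph V) (S : Set V)
    (t : V) : (G.eraseVerts (S \ {t})).eraseVerts {t} ≤ G.eraseVerts S :=
  fun _ _ ⟨⟨h, hu, hv⟩, hut, hvt⟩ => ⟨h, fun huS => hu ⟨huS, hut⟩, fun hvS => hv ⟨hvS, hvt⟩⟩

namespace Walk

variable {G : SimpleGraph V} {u v w : V}

lemma IsPath.eq_of_mem_support_of_append {p : G.Walk u v} {q : G.Walk v w}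
    (hpq : (p.append q).IsPath) {x : V} (hxp : x ∈ p.support) (hxq : x ∈ q.support) : x = v :=
  of_not_not fun hxv => hpq.ne_of_mem_support_of_append hxv hxp hxq rfl

lemma IsPath.append {p : G.Walk u v} {q : G.Walk v w} (hp : p.IsPath) (hq : q.IsPath)
    (h : ∀ x ∈ p.support, x ∈ q.support → x = v) : (p.append q).IsPath := by
  induction p with
  | nil => exact hq
  | cons hadj p ih =>
    rw [cons_append, cons_isPath_iff]
    rw [cons_isPath_iff] at hp
    refine ⟨ih hp.1 hq fun x hx hxq => h x (List.mem_cons_of_mem _ hx) hxq, ?_⟩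
    rw [mem_support_append_iff]
    rintro (hu | hu)
    · exact hp.2 hu
    · obtain rfl := h _ (start_mem_support _) hu
      exact hp.2 (end_mem_support p)

def toEraseVerts {S : Set V} (p : G.Walk u v) (h : ∀ x ∈ p.support, x ∉ S) :
    (G.eraseVerts S).Walk u v :=
  p.transfer _ fun e he => by
    induction e using Sym2.ind with
    | _ a b =>
      exact ⟨p.adj_of_mem_edges he, h a (p.fst_mem_support_of_mem_edges he),
        h b (p.snd_mem_support_of_mem_edges he)⟩

@[simp]
lemma support_toEraseVerts {S : Set V} (p : G.Walk u v) (h : ∀ x ∈ p.support, x ∉ S) :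
    (p.toEraseVerts h).support = p.support :=
  support_transfer _ _

lemma IsPath.toEraseVerts {S : Set V} {p : G.Walk u v} (hp : p.IsPath)
    (h : ∀ x ∈ p.support, x ∉ S) : (p.toEraseVerts h).IsPath :=
  hp.transfer _

end Walk

end SimpleGraph

section TwoIVD

variable {G H : SimpleGraph V} {a b : V}

lemma IntDisjoint.symm {p q : G.Walk a b} (h : IntDisjoint p q) : IntDisjoint q p :=
  fun x hxq hxp => h x hxp hxq

lemma IntDisjoint.reverse {p q : G.Walk a b} (h : IntDisjoint p q) :
    IntDisjoint p.reverse q.reverse := by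
  intro x hxp hxq
  rw [Walk.support_reverse, List.mem_reverse] at hxp hxq
  exact (h x hxp hxq).symm

lemma TwoIVD.symm (h : TwoIVD G a b) : TwoIVD G b a :=
  let ⟨p, q, hp, hq, hd⟩ := h
  ⟨p.reverse, q.reverse, hp.reverse, hq.reverse, hd.reverse⟩

lemma TwoIVD.mono (hGH : G ≤ H) (h : TwoIVD G a b) : TwoIVD H a b := by
  obtain ⟨p, q, hp, hq, hd⟩ := h
  refine ⟨p.mapLe hGH, q.mapLe hGH, hp.mapLe hGH, hq.mapLe hGH, ?_⟩
  simpa only [IntDisjoint, Walk.support_mapLe_eq_support] using hd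

lemma twoIVD_eraseVerts_of_avoid {S : Set V} {p q : G.Walk a b} (hp : p.IsPath) (hq : q.IsPath)
    (hd : IntDisjoint p q) (hpS : ∀ x ∈ p.support, x ∉ S) (hqS : ∀ x ∈ q.support, x ∉ S) :
    TwoIVD (G.eraseVerts S) a b := by
  refine ⟨p.toEraseVerts hpS, q.toEraseVerts hqS, hp.toEraseVerts hpS, hq.toEraseVerts hqS, ?_⟩
  simpa only [IntDisjoint, Walk.support_toEraseVerts] using hd

lemma twoIVD_of_mem_support {t t₁ t₂ : V} {p q : G.Walk t₁ t₂} (hp : p.IsPath) (hq : q.IsPath)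
    (hd : IntDisjoint p q) (ht : t ∈ p.support) (ht₁ : t₁ ≠ t) (ht₂ : t₂ ≠ t) :
    TwoIVD G t t₁ := by
  obtain ⟨p₁, p₂, hp₁, hp₂, rfl⟩ := hp.mem_support_iff_exists_append.mp ht
  have hp₁q : ∀ x ∈ p₁.support, x ∈ q.support → x = t₁ := fun x hx hxq =>
    (hd x ((p₁.mem_support_append_iff p₂).mpr (.inl hx)) hxq).resolve_right fun hx₂ =>
      ht₂ (hp.eq_of_mem_support_of_append (hx₂ ▸ hx) p₂.end_mem_support)
  have hp₂q : ∀ x ∈ p₂.support, x ∈ q.support → x = t₂ := fun x hx hxq =>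
    (hd x ((p₁.mem_support_append_iff p₂).mpr (.inr hx)) hxq).resolve_left fun hx₁ =>
      ht₁ (hp.eq_of_mem_support_of_append p₁.start_mem_support (hx₁ ▸ hx))
  refine ⟨p₁.reverse, p₂.append q.reverse, hp₁.reverse, hp₂.append hq.reverse ?_, ?_⟩
  · intro x hx hxq
    exact hp₂q x hx (by simpa using hxq)
  · intro x hx hx'
    rw [Walk.support_reverse, List.mem_reverse] at hx
    rcases (p₂.mem_support_append_iff _).mp hx' with hx₂ | hxq
    · exact .inl (hp.eq_of_mem_support_of_append hx hx₂)
    · exact .inr (hp₁q x hx (by simpa using hxq))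

end TwoIVD

section MWNS

variable {G : SimpleGraph V} {T S : Set V}

lemma IsMWNS.anti {T' : Set V} (hS : IsMWNS G T S) (hT : T' ⊆ T) : IsMWNS G T' S :=
  ⟨hS.1.trans (Set.compl_subset_compl.mpr hT),
    fun t₁ ht₁ t₂ ht₂ hne => hS.2 t₁ (hT ht₁) t₂ (hT ht₂) hne⟩

lemma IsMWNS.sdiff_singleton {t : V} (hsep : ∀ t' ∈ T \ {t}, ¬ TwoIVD G t t')
    (hS : IsMWNS G (T \ {t}) S) : IsMWNS G T (S \ {t}) := by
  refine ⟨fun x ⟨hxS, hxt⟩ hxT => hS.1 hxS ⟨hxT, hxt⟩, ?_⟩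
  rintro t₁ ht₁ t₂ ht₂ hne ⟨p, q, hp, hq, hd⟩
  have hsep' : ∀ t' ∈ T, t' ≠ t → ¬ TwoIVD (G.eraseVerts (S \ {t})) t t' :=
    fun t' ht' ht't h => hsep t' ⟨ht', ht't⟩ (h.mono (eraseVerts_le _ _))
  obtain rfl | h₁ := eq_or_ne t₁ t
  · exact hsep' t₂ ht₂ hne.symm ⟨p, q, hp, hq, hd⟩
  obtain rfl | h₂ := eq_or_ne t₂ t
  · exact hsep' t₁ ht₁ hne (TwoIVD.symm ⟨p, q, hp, hq, hd⟩)
  by_cases htp : t ∈ p.support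
  · exact hsep' t₁ ht₁ h₁ (twoIVD_of_mem_support hp hq hd htp h₁ h₂)
  by_cases htq : t ∈ q.support
  · exact hsep' t₁ ht₁ h₁ (twoIVD_of_mem_support hq hp hd.symm htq h₁ h₂)
  have hpt : ∀ x ∈ p.support, x ∉ ({t} : Set V) := fun x hx hxt => htp (hxt ▸ hx)
  have hqt : ∀ x ∈ q.support, x ∉ ({t} : Set V) := fun x hx hxt => htq (hxt ▸ hx)
  exact hS.2 t₁ ⟨ht₁, h₁⟩ t₂ ⟨ht₂, h₂⟩ hne <| (twoIVD_eraseVerts_of_avoid hp hq hd hpt hqt).mono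
    (eraseVerts_sdiff_singleton_eraseVerts_singleton_le G S t)

end MWNS

theorem stmt11_general (G : SimpleGraph V) (T : Set V) (k : ℕ)
    (t : V)
    (hsep : ∀ t' ∈ T \ {t}, ¬ TwoIVD G t t') :
    (∃ S : Set V, S ⊆ Tᶜ ∧ S.ncard ≤ k ∧ IsMWNS G T S) ↔
    (∃ S' : Set V, S' ⊆ (T \ {t})ᶜ ∧ S'.ncard ≤ k ∧ IsMWNS G (T \ {t}) S') := by
  constructor
  · rintro ⟨S, -, hk, hS⟩
    have hS' := hS.anti (Set.sdiff_subset (t := {t}))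
    exact ⟨S, hS'.1, hk, hS'⟩
  · rintro ⟨S', -, hk, hS'⟩
    have hS := hS'.sdiff_singleton hsep
    exact ⟨S' \ {t}, hS.1, (Set.ncard_sdiff_singleton_le S' t).trans hk, hS⟩

theorem stmt11 [Fintype V] (G : SimpleGraph V) (T : Set V) (k : ℕ)
    (t : V) (ht : t ∈ T)
    (hsep : ∀ t' ∈ T \ {t}, ¬ TwoIVD G t t') :
    (∃ S : Set V, S ⊆ Tᶜ ∧ S.ncard ≤ k ∧ IsMWNS G T S) ↔
    (∃ S' : Set V, S' ⊆ (T \ {t})ᶜ ∧ S'.ncard ≤ k ∧ IsMWNS G (T \ {t}) S') :=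
  stmt11_general G T k t hsep
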